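/- (Orthogonality of eigenfunctions on (a,b).) Let a, b ∈ I with a ≤ s0 ≤ b, let r : I → ℝ be continuous on [a,b], and let a1, a2, b1, b2 be real numbers with |a1| + |a2| ≠ 0 and |b1| + |b2| ≠ 0. Suppose λ1, λ2 ∈ ℂ with λ1 ≠ λ2, and φ1, φ2 : I → ℂ belong to L²_β(a,b), are continuous and differentiable at s0, have D_β φj differentiable at s0 and D_β φj, D_{β^{-1}}D_β φj bounded on {β^k(a), β^k(b) : k ∈ ℕ₀} ∪ {s0}, satisfy ℓ_β φj(t) = λj·φj(t) for all t in {β^k(a), β^k(b) : k ∈ ℕ₀} ∪ {s0}, the boundary conditions a1·φj(a) + a2·(D_{β^{-1}}φj)(a) = 0 and b1·φj(b) + b2·(D_{β^{-1}}φj)(b) = 0, and ∫_{a}^{b} |φj|² d_β > 0, for j = 1, 2. Then ⟨φ1, φ2⟩ = ∫_{a}^{b} φ1(t)·conj(φ2(t)) d_β t = 0. -/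

import Mathlib

open Function Set ComplexConjugate

/-- The β-derivative `D_β f` of `f : ℝ → ℂ`:
`(f (β t) - f t) / (β t - t)` for `t ≠ s0`, and `f' s0` at `t = s0`. -/
noncomputable def Dq (β : ℝ → ℝ) (s0 : ℝ) (f : ℝ → ℂ) (t : ℝ) : ℂ :=
  if t = s0 then deriv f s0 else (f (β t) - f t) / ((β t : ℂ) - (t : ℂ))

/-- The β-integral `∫_{s0}^{x} f d_β = ∑_{k} (β^k x - β^{k+1} x) f (β^k x)` (complex-valued). -/
noncomputable def betaInt (β : ℝ → ℝ) (x : ℝ) (f : ℝ → ℂ) : ℂ :=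
  ∑' k : ℕ, ((β^[k] x - β^[k + 1] x : ℝ) : ℂ) * f (β^[k] x)

/-- The β-integral `∫_{s0}^{x} f d_β` for a real-valued integrand. -/
noncomputable def betaIntR (β : ℝ → ℝ) (x : ℝ) (f : ℝ → ℝ) : ℝ :=
  ∑' k : ℕ, (β^[k] x - β^[k + 1] x) * f (β^[k] x)

/-- `∫_a^b f d_β := ∫_{s0}^b f d_β - ∫_{s0}^a f d_β`. -/
noncomputable def betaIntAB (β : ℝ → ℝ) (a b : ℝ) (f : ℝ → ℂ) : ℂ :=
  betaInt β b f - betaInt β a f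

/-- `∫_a^b f d_β` for a real-valued integrand. -/
noncomputable def betaIntRAB (β : ℝ → ℝ) (a b : ℝ) (f : ℝ → ℝ) : ℝ :=
  betaIntR β b f - betaIntR β a f

/-- `D_β β⁻¹`, viewed as a complex-valued function. -/
noncomputable def DbinvC (β βinv : ℝ → ℝ) (s0 : ℝ) : ℝ → ℂ :=
  Dq β s0 fun u => (βinv u : ℂ)

/-- The β-Sturm–Liouville operator
`ℓ_β y (t) = -(D_β β⁻¹)(t) · (D_{β⁻¹} (D_β y))(t) + r t · y t`. -/
noncomputable def ellBeta (β βinv : ℝ → ℝ) (s0 : ℝ) (r : ℝ → ℝ) (y : ℝ → ℂ) (t : ℝ) : ℂ :=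
  -(DbinvC β βinv s0 t) * Dq βinv s0 (Dq β s0 y) t + (r t : ℂ) * y t

/-- The β-Wronskian `[y,z](t) = y t · (D_{β⁻¹} z) t - z t · (D_{β⁻¹} y) t`. -/
noncomputable def wronk (βinv : ℝ → ℝ) (s0 : ℝ) (y z : ℝ → ℂ) (t : ℝ) : ℂ :=
  y t * Dq βinv s0 z t - z t * Dq βinv s0 y t

/-- The β-exponential `e_{p,β}(t) = 1 / ∏_k (1 - p(β^k t)(β^k t - β^{k+1} t))`. -/
noncomputable def ebeta (β : ℝ → ℝ) (p : ℝ → ℂ) (t : ℝ) : ℂ :=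
  1 / ∏' k : ℕ, (1 - p (β^[k] t) * ((β^[k] t - β^[k + 1] t : ℝ) : ℂ))

/-- The β-exponential `E_{p,β}(t) = ∏_k (1 + p(β^k t)(β^k t - β^{k+1} t))`. -/
noncomputable def Ebeta (β : ℝ → ℝ) (p : ℝ → ℂ) (t : ℝ) : ℂ :=
  ∏' k : ℕ, (1 + p (β^[k] t) * ((β^[k] t - β^[k + 1] t : ℝ) : ℂ))

/-- `sin_{p,β}(t) = (e_{ip,β}(t) - e_{-ip,β}(t)) / (2i)`. -/
noncomputable def sinBeta (β : ℝ → ℝ) (p : ℝ → ℂ) (t : ℝ) : ℂ :=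
  (ebeta β (fun s => Complex.I * p s) t - ebeta β (fun s => -(Complex.I * p s)) t) /
    (2 * Complex.I)

/-- `cos_{p,β}(t) = (e_{ip,β}(t) + e_{-ip,β}(t)) / 2`. -/
noncomputable def cosBeta (β : ℝ → ℝ) (p : ℝ → ℂ) (t : ℝ) : ℂ :=
  (ebeta β (fun s => Complex.I * p s) t + ebeta β (fun s => -(Complex.I * p s)) t) / 2


/-!
For solutions of `ℓ_β f = μ f` and `ℓ_β g = ν g`, the β-Lagrange identity
`(t - β t) (ℓ_β f · g - f · ℓ_β g)(t) = [f,g](t) - [f,g](β t)` telescopes along the orbit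
`β^[k] x → s0`, which gives Green's formula `(μ - ν) ∫_{s0}^x f g d_β = [f,g](x) - [f,g](s0)`.
Separated boundary conditions make the Wronskian `[f,g]` vanish at `a` and `b`, so
`(μ - ν) ∫_a^b f g d_β = 0`. For `(φ₂, conj φ₂)` this shows that `λ₂` is real, and then
`(φ₁, conj φ₂)` gives `(λ₁ - λ₂) ⟨φ₁, φ₂⟩ = 0`.
-/

open Filter Topology

theorem MonotoneOn.tendsto_iterate_of_le {α : Type*} [ConditionallyCompleteLinearOrder α]
    [TopologicalSpace α] [OrderTopology α] {I : Set α} {f : α → α} {s0 x : α}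
    (hI : I.OrdConnected) (hmono : MonotoneOn f I) (hcont : ContinuousOn f I)
    (hs0 : s0 ∈ I) (hfix : f s0 = s0) (hle : ∀ t ∈ I, s0 ≤ t → f t ≤ t)
    (huniq : ∀ t ∈ I, f t = t → t = s0) (hx : x ∈ I) (hsx : s0 ≤ x) :
    Tendsto (fun k => f^[k] x) atTop (𝓝 s0) := by
  have hIcc : Icc s0 x ⊆ I := hI.out hs0 hx
  have hmaps : MapsTo f (Icc s0 x) (Icc s0 x) := fun t ht =>
    ⟨hfix ▸ hmono hs0 (hIcc ht) ht.1, (hle t (hIcc ht) ht.1).trans ht.2⟩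
  have horbit : ∀ k, f^[k] x ∈ Icc s0 x := fun k => hmaps.iterate k ⟨hsx, le_rfl⟩
  have hanti : Antitone fun k => f^[k] x := antitone_nat_of_succ_le fun k => by
    rw [iterate_succ_apply']
    exact hle _ (hIcc (horbit k)) (horbit k).1
  have hbdd : BddBelow (range fun k => f^[k] x) := ⟨s0, forall_mem_range.2 fun k => (horbit k).1⟩
  set L := ⨅ k, f^[k] x
  have hL : Tendsto (fun k => f^[k] x) atTop (𝓝 L) := tendsto_atTop_ciInf hanti hbdd
  have hLmem : L ∈ Icc s0 x := isClosed_Icc.mem_of_tendsto hL (Eventually.of_forall horbit)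
  -- `f` is only continuous within `I`, so `isFixedPt_of_tendsto_iterate` does not apply directly.
  have hfL : Tendsto (fun k => f^[k + 1] x) atTop (𝓝 (f L)) := by
    simp only [iterate_succ_apply']
    exact (hcont L (hIcc hLmem)).tendsto.comp
      (tendsto_nhdsWithin_iff.2 ⟨hL, Eventually.of_forall fun k => hIcc (horbit k)⟩)
  have hLfix : f L = L := tendsto_nhds_unique hfL ((tendsto_add_atTop_iff_nat 1).2 hL)
  rwa [huniq L (hIcc hLmem) hLfix] at hL

theorem MonotoneOn.tendsto_iterate {I : Set ℝ} {f : ℝ → ℝ} {s0 x : ℝ}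
    (hI : I.OrdConnected) (hmono : MonotoneOn f I) (hcont : ContinuousOn f I)
    (hs0 : s0 ∈ I) (hfix : f s0 = s0) (hsign : ∀ t ∈ I, (t - s0) * (f t - t) ≤ 0)
    (huniq : ∀ t ∈ I, f t = t → t = s0) (hx : x ∈ I) :
    Tendsto (fun k => f^[k] x) atTop (𝓝 s0) := by
  have hle : ∀ t ∈ I, s0 ≤ t → f t ≤ t := fun t ht hst => by
    rcases hst.eq_or_lt with rfl | hst
    · exact hfix.le
    · nlinarith [hsign t ht]
  have hge : ∀ t ∈ I, t ≤ s0 → t ≤ f t := fun t ht hts => by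
    rcases hts.eq_or_lt with rfl | hts
    · exact hfix.ge
    · nlinarith [hsign t ht]
  rcases le_total s0 x with hsx | hxs
  · exact hmono.tendsto_iterate_of_le hI hcont hs0 hfix hle huniq hx hsx
  · exact hmono.dual.tendsto_iterate_of_le (α := ℝᵒᵈ) hI.dual hcont hs0 hfix hge huniq
      hx hxs

lemma Dq_self (β : ℝ → ℝ) (s0 : ℝ) (f : ℝ → ℂ) : Dq β s0 f s0 = deriv f s0 := if_pos rfl

lemma Dq_conj (β : ℝ → ℝ) (s0 : ℝ) (f : ℝ → ℂ) :
    Dq β s0 (fun s => conj (f s)) = fun t => conj (Dq β s0 f t) := by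
  funext t
  by_cases ht : t = s0
  · simp only [Dq, if_pos ht]
    exact deriv.star
  · simp [Dq, ht, map_div₀]

lemma conj_DbinvC (β βinv : ℝ → ℝ) (s0 t : ℝ) :
    conj (DbinvC β βinv s0 t) = DbinvC β βinv s0 t := by
  simpa [DbinvC] using (congrFun (Dq_conj β s0 fun u => (βinv u : ℂ)) t).symm

lemma ellBeta_conj (β βinv : ℝ → ℝ) (s0 : ℝ) (r : ℝ → ℝ) (f : ℝ → ℂ) (t : ℝ) :
    ellBeta β βinv s0 r (fun s => conj (f s)) t = conj (ellBeta β βinv s0 r f t) := by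
  simp only [ellBeta, Dq_conj, map_add, map_mul, map_neg, conj_DbinvC, Complex.conj_ofReal]

lemma Dq_inv_eq {β βinv : ℝ → ℝ} {s0 t : ℝ} (f : ℝ → ℂ) (ht : t ≠ s0) (hinv : βinv t ≠ s0)
    (hβ : β (βinv t) = t) :
    Dq βinv s0 f t = Dq β s0 f (βinv t) := by
  simp only [Dq, if_neg ht, if_neg hinv, hβ]
  rw [← neg_sub (f t), ← neg_sub (t : ℂ), neg_div_neg_eq]

lemma lagrange_identity {β βinv : ℝ → ℝ} {s0 t : ℝ} (r : ℝ → ℝ) (f g : ℝ → ℂ)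
    (ht : t ≠ s0) (hβt : β t ≠ t) (hβs0 : β t ≠ s0) (hinvs0 : βinv t ≠ s0)
    (hβinv : β (βinv t) = t) (hinvβ : βinv (β t) = t) :
    ((t - β t : ℝ) : ℂ) * (ellBeta β βinv s0 r f t * g t - f t * ellBeta β βinv s0 r g t)
      = wronk βinv s0 f g t - wronk βinv s0 f g (β t) := by
  have hinvt : βinv t ≠ t := fun h => hβt (by rw [← h, hβinv, h])
  have c1 : (β t : ℂ) - t ≠ 0 := sub_ne_zero.2 (by exact_mod_cast hβt)
  have c2 : (βinv t : ℂ) - t ≠ 0 := sub_ne_zero.2 (by exact_mod_cast hinvt)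
  have c3 : (t : ℂ) - β t ≠ 0 := sub_ne_zero.2 (by exact_mod_cast hβt.symm)
  have c4 : (t : ℂ) - βinv t ≠ 0 := sub_ne_zero.2 (by exact_mod_cast hinvt.symm)
  simp only [ellBeta, wronk, DbinvC, Dq, if_neg ht, if_neg hβs0, if_neg hinvs0, hβinv, hinvβ]
  field_simp
  push_cast
  ring

lemma wronk_eq_zero_of_boundary {βinv : ℝ → ℝ} {s0 c1 c2 x : ℝ} (hc : |c1| + |c2| ≠ 0)
    {f g : ℝ → ℂ} (hf : (c1 : ℂ) * f x + (c2 : ℂ) * Dq βinv s0 f x = 0)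
    (hg : (c1 : ℂ) * g x + (c2 : ℂ) * Dq βinv s0 g x = 0) :
    wronk βinv s0 f g x = 0 := by
  have h1 : (c1 : ℂ) * wronk βinv s0 f g x = 0 := by
    unfold wronk; linear_combination Dq βinv s0 g x * hf - Dq βinv s0 f x * hg
  have h2 : (c2 : ℂ) * wronk βinv s0 f g x = 0 := by
    unfold wronk; linear_combination f x * hg - g x * hf
  by_contra hW
  have hc1 : c1 = 0 := by exact_mod_cast (mul_eq_zero.1 h1).resolve_right hW
  have hc2 : c2 = 0 := by exact_mod_cast (mul_eq_zero.1 h2).resolve_right hW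
  simp [hc1, hc2] at hc

lemma boundary_conj {βinv : ℝ → ℝ} {s0 c1 c2 x : ℝ} {f : ℝ → ℂ}
    (hf : (c1 : ℂ) * f x + (c2 : ℂ) * Dq βinv s0 f x = 0) :
    (c1 : ℂ) * conj (f x) + (c2 : ℂ) * Dq βinv s0 (fun s => conj (f s)) x = 0 := by
  simpa [Dq_conj] using congrArg conj hf

lemma summable_mul_mul_of_summable_sq {w : ℕ → ℝ} {u v : ℕ → ℂ}
    (hu : Summable fun k => w k * ‖u k‖ ^ 2) (hv : Summable fun k => w k * ‖v k‖ ^ 2) :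
    Summable fun k => (w k : ℂ) * (u k * v k) := by
  refine Summable.of_norm_bounded ((hu.abs.add hv.abs).div_const 2) fun k => ?_
  have amgm : ‖u k‖ * ‖v k‖ ≤ (‖u k‖ ^ 2 + ‖v k‖ ^ 2) / 2 := by
    nlinarith [sq_nonneg (‖u k‖ - ‖v k‖)]
  calc ‖(w k : ℂ) * (u k * v k)‖ = |w k| * (‖u k‖ * ‖v k‖) := by
        rw [norm_mul, norm_mul, Complex.norm_real, Real.norm_eq_abs]
    _ ≤ |w k| * ((‖u k‖ ^ 2 + ‖v k‖ ^ 2) / 2) := by gcongr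
    _ = (|w k * ‖u k‖ ^ 2| + |w k * ‖v k‖ ^ 2|) / 2 := by
        rw [abs_mul, abs_mul, abs_of_nonneg (sq_nonneg ‖u k‖), abs_of_nonneg (sq_nonneg ‖v k‖)]
        ring

lemma tsum_eq_sub_of_telescoping {E : Type*} [AddCommGroup E] [TopologicalSpace E]
    [IsTopologicalAddGroup E] [T2Space E] {F T : ℕ → E} {l : E} (hF : Summable F)
    (hstep : ∀ k, F k = T k - T (k + 1)) (hT : Tendsto T atTop (𝓝 l)) :
    ∑' k, F k = T 0 - l := by
  refine tendsto_nhds_unique hF.hasSum.tendsto_sum_nat ?_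
  simp only [hstep, Finset.sum_range_sub']
  exact tendsto_const_nhds.sub hT

structure IsBetaMap (I : Set ℝ) (β βinv : ℝ → ℝ) (s0 : ℝ) : Prop where
  ordConnected : I.OrdConnected
  strictMonoOn : StrictMonoOn β I
  continuousOn : ContinuousOn β I
  mapsTo : MapsTo β I I
  invOn : InvOn βinv β I I
  mem : s0 ∈ I
  fixed : β s0 = s0
  sign : ∀ t ∈ I, (t - s0) * (β t - t) ≤ 0
  eq_of_sign_eq_zero : ∀ t ∈ I, (t - s0) * (β t - t) = 0 → t = s0

structure IsOrbitEigenfunction (β βinv : ℝ → ℝ) (s0 : ℝ) (r : ℝ → ℝ) (μ : ℂ) (f : ℝ → ℂ)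
    (x : ℝ) : Prop where
  ellBeta_eq : ∀ k, ellBeta β βinv s0 r f (β^[k] x) = μ * f (β^[k] x)
  summable_sq : Summable fun k => (β^[k] x - β^[k + 1] x) * ‖f (β^[k] x)‖ ^ 2
  continuousAt : ContinuousAt f s0
  continuousAt_Dq : ContinuousAt (Dq β s0 f) s0

lemma IsOrbitEigenfunction.conj {β βinv : ℝ → ℝ} {s0 : ℝ} {r : ℝ → ℝ} {μ : ℂ} {f : ℝ → ℂ}
    {x : ℝ} (hf : IsOrbitEigenfunction β βinv s0 r μ f x) :
    IsOrbitEigenfunction β βinv s0 r (conj μ) (fun s => conj (f s)) x where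
  ellBeta_eq k := by rw [ellBeta_conj, hf.ellBeta_eq, map_mul]
  summable_sq := by simpa using hf.summable_sq
  continuousAt := Complex.continuous_conj.continuousAt.comp hf.continuousAt
  continuousAt_Dq := by
    rw [Dq_conj]
    exact Complex.continuous_conj.continuousAt.comp hf.continuousAt_Dq

namespace IsBetaMap

variable {I : Set ℝ} {β βinv : ℝ → ℝ} {s0 : ℝ}

lemma eq_of_apply_eq (h : IsBetaMap I β βinv s0) {t : ℝ} (ht : t ∈ I) (hβt : β t = t) :
    t = s0 := h.eq_of_sign_eq_zero t ht (by rw [hβt, sub_self, mul_zero])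

lemma apply_ne_self (h : IsBetaMap I β βinv s0) {t : ℝ} (ht : t ∈ I) (hts : t ≠ s0) :
    β t ≠ t := fun hβt => hts (h.eq_of_apply_eq ht hβt)

lemma apply_ne (h : IsBetaMap I β βinv s0) {t : ℝ} (ht : t ∈ I) (hts : t ≠ s0) :
    β t ≠ s0 := fun hβt => hts (h.strictMonoOn.injOn ht h.mem (hβt.trans h.fixed.symm))

lemma inv_ne (h : IsBetaMap I β βinv s0) {t : ℝ} (ht : t ∈ I) (hts : t ≠ s0) :
    βinv t ≠ s0 := fun hinv => hts (by rw [← h.invOn.2 ht, hinv, h.fixed])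

lemma wronk_apply (h : IsBetaMap I β βinv s0) (f g : ℝ → ℂ) {t : ℝ} (ht : t ∈ I)
    (hts : t ≠ s0) :
    wronk βinv s0 f g (β t) = f (β t) * Dq β s0 g t - g (β t) * Dq β s0 f t := by
  have hinv : βinv (β t) = t := h.invOn.1 ht
  have hinvs : βinv (β t) ≠ s0 := by rwa [hinv]
  have hβ : β (βinv (β t)) = β t := by rw [hinv]
  simp only [wronk, Dq_inv_eq _ (h.apply_ne ht hts) hinvs hβ, hinv]

lemma iterate_ne (h : IsBetaMap I β βinv s0) {x : ℝ} (hx : x ∈ I) (hxs : x ≠ s0) (k : ℕ) :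
    β^[k] x ≠ s0 := fun hk =>
  hxs (h.strictMonoOn.injOn.iterate h.mapsTo k hx h.mem
    (hk.trans (iterate_fixed h.fixed k).symm))

lemma tendsto_iterate (h : IsBetaMap I β βinv s0) {x : ℝ} (hx : x ∈ I) :
    Tendsto (fun k => β^[k] x) atTop (𝓝 s0) :=
  h.strictMonoOn.monotoneOn.tendsto_iterate h.ordConnected h.continuousOn h.mem h.fixed h.sign
    (fun _ => h.eq_of_apply_eq) hx

lemma sub_mul_betaInt {r : ℝ → ℝ} {μ ν : ℂ} {f g : ℝ → ℂ} {x : ℝ} (h : IsBetaMap I β βinv s0)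
    (hx : x ∈ I) (hf : IsOrbitEigenfunction β βinv s0 r μ f x)
    (hg : IsOrbitEigenfunction β βinv s0 r ν g x) :
    (μ - ν) * betaInt β x (fun t => f t * g t) = wronk βinv s0 f g x - wronk βinv s0 f g s0 := by
  by_cases hxs : x = s0
  · subst hxs
    simp [betaInt, iterate_fixed h.fixed]
  set T : ℕ → ℂ := fun k => wronk βinv s0 f g (β^[k] x)
  have horbit : ∀ k, β^[k] x ∈ I := fun k => h.mapsTo.iterate k hx
  have hstep : ∀ k, (μ - ν) * (((β^[k] x - β^[k + 1] x : ℝ) : ℂ) * (f (β^[k] x) * g (β^[k] x)))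
      = T k - T (k + 1) := fun k => by
    have hk := horbit k
    have hks := h.iterate_ne hx hxs k
    simp only [T, iterate_succ_apply', ← lagrange_identity r f g hks (h.apply_ne_self hk hks)
      (h.apply_ne hk hks) (h.inv_ne hk hks) (h.invOn.2 hk) (h.invOn.1 hk),
      hf.ellBeta_eq, hg.ellBeta_eq]
    ring
  have hT : Tendsto T atTop (𝓝 (wronk βinv s0 f g s0)) := by
    have horb := h.tendsto_iterate hx
    have horb' : Tendsto (fun k => β (β^[k] x)) atTop (𝓝 s0) := by
      simpa only [iterate_succ_apply'] using (tendsto_add_atTop_iff_nat 1).2 horb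
    have hlim :=
      ((hf.continuousAt.tendsto.comp horb').mul (hg.continuousAt_Dq.tendsto.comp horb)).sub
        ((hg.continuousAt.tendsto.comp horb').mul (hf.continuousAt_Dq.tendsto.comp horb))
    rw [← tendsto_add_atTop_iff_nat 1]
    simp only [T, iterate_succ_apply', h.wronk_apply f g (horbit _) (h.iterate_ne hx hxs _)]
    simpa only [wronk, Dq_self, Function.comp_def] using hlim
  have hsum := summable_mul_mul_of_summable_sq hf.summable_sq hg.summable_sq
  calc (μ - ν) * betaInt β x (fun t => f t * g t)
      = ∑' k, (μ - ν) * (((β^[k] x - β^[k + 1] x : ℝ) : ℂ) * (f (β^[k] x) * g (β^[k] x))) :=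
        tsum_mul_left.symm
    _ = wronk βinv s0 f g x - wronk βinv s0 f g s0 :=
        tsum_eq_sub_of_telescoping (hsum.mul_left _) hstep hT

lemma sub_mul_betaIntAB_eq_zero {r : ℝ → ℝ} {μ ν : ℂ} {f g : ℝ → ℂ} {a b a1 a2 b1 b2 : ℝ}
    (h : IsBetaMap I β βinv s0) (ha : a ∈ I) (hb : b ∈ I)
    (hfa : IsOrbitEigenfunction β βinv s0 r μ f a) (hfb : IsOrbitEigenfunction β βinv s0 r μ f b)
    (hga : IsOrbitEigenfunction β βinv s0 r ν g a) (hgb : IsOrbitEigenfunction β βinv s0 r ν g b)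
    (ha12 : |a1| + |a2| ≠ 0) (hfa' : (a1 : ℂ) * f a + (a2 : ℂ) * Dq βinv s0 f a = 0)
    (hga' : (a1 : ℂ) * g a + (a2 : ℂ) * Dq βinv s0 g a = 0)
    (hb12 : |b1| + |b2| ≠ 0) (hfb' : (b1 : ℂ) * f b + (b2 : ℂ) * Dq βinv s0 f b = 0)
    (hgb' : (b1 : ℂ) * g b + (b2 : ℂ) * Dq βinv s0 g b = 0) :
    (μ - ν) * betaIntAB β a b (fun t => f t * g t) = 0 := by
  rw [betaIntAB, mul_sub, h.sub_mul_betaInt hb hfb hgb, h.sub_mul_betaInt ha hfa hga,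
    wronk_eq_zero_of_boundary hb12 hfb' hgb', wronk_eq_zero_of_boundary ha12 hfa' hga']
  ring

end IsBetaMap

lemma betaIntAB_mul_conj_self (β : ℝ → ℝ) (a b : ℝ) (f : ℝ → ℂ) :
    betaIntAB β a b (fun t => f t * conj (f t)) = betaIntRAB β a b fun t => ‖f t‖ ^ 2 := by
  simp only [betaIntAB, betaIntRAB, betaInt, betaIntR, Complex.ofReal_sub, Complex.ofReal_tsum,
    Complex.ofReal_mul, Complex.ofReal_pow, Complex.mul_conj']

theorem stmt_13_general
    (I : Set ℝ) (hIconn : I.OrdConnected)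
    (β βinv : ℝ → ℝ) (s0 : ℝ)
    (hmono : StrictMonoOn β I) (hcont : ContinuousOn β I)
    (hbij : Set.BijOn β I I) (hinv : Set.InvOn βinv β I I)
    (hs0I : s0 ∈ I) (hfix : β s0 = s0)
    (hsign : ∀ t ∈ I, (t - s0) * (β t - t) ≤ 0)
    (huniq : ∀ t ∈ I, (t - s0) * (β t - t) = 0 → t = s0)
    (a b : ℝ) (ha : a ∈ I) (hb : b ∈ I)
    (r : ℝ → ℝ)
    (a1 a2 b1 b2 : ℝ) (ha12 : |a1| + |a2| ≠ 0) (hb12 : |b1| + |b2| ≠ 0)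
    (lam1 lam2 : ℂ) (hlam : lam1 ≠ lam2) (phi1 phi2 : ℝ → ℂ)
    (hphi1L2a : Summable fun j : ℕ => (β^[j] a - β^[j + 1] a) * ‖phi1 (β^[j] a)‖ ^ 2)
    (hphi1L2b : Summable fun j : ℕ => (β^[j] b - β^[j + 1] b) * ‖phi1 (β^[j] b)‖ ^ 2)
    (hphi1c : ContinuousAt phi1 s0)
    (hDphi1d : DifferentiableAt ℝ (Dq β s0 phi1) s0)
    (hphi1eig : ∀ t ∈ insert s0 (Set.range (fun j : ℕ => β^[j] a) ∪ Set.range (fun j : ℕ => β^[j] b)), ellBeta β βinv s0 r phi1 t = lam1 * phi1 t)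
    (hphi1bc1 : (a1 : ℂ) * phi1 a + (a2 : ℂ) * Dq βinv s0 phi1 a = 0)
    (hphi1bc2 : (b1 : ℂ) * phi1 b + (b2 : ℂ) * Dq βinv s0 phi1 b = 0)
    (hphi2L2a : Summable fun j : ℕ => (β^[j] a - β^[j + 1] a) * ‖phi2 (β^[j] a)‖ ^ 2)
    (hphi2L2b : Summable fun j : ℕ => (β^[j] b - β^[j + 1] b) * ‖phi2 (β^[j] b)‖ ^ 2)
    (hphi2c : ContinuousAt phi2 s0)
    (hDphi2d : DifferentiableAt ℝ (Dq β s0 phi2) s0)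
    (hphi2eig : ∀ t ∈ insert s0 (Set.range (fun j : ℕ => β^[j] a) ∪ Set.range (fun j : ℕ => β^[j] b)), ellBeta β βinv s0 r phi2 t = lam2 * phi2 t)
    (hphi2bc1 : (a1 : ℂ) * phi2 a + (a2 : ℂ) * Dq βinv s0 phi2 a = 0)
    (hphi2bc2 : (b1 : ℂ) * phi2 b + (b2 : ℂ) * Dq βinv s0 phi2 b = 0)
    (hphi2pos : 0 < betaIntRAB β a b fun t => ‖phi2 t‖ ^ 2) :
    betaIntAB β a b (fun t => phi1 t * conj (phi2 t)) = 0 := by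
  have hβ : IsBetaMap I β βinv s0 :=
    ⟨hIconn, hmono, hcont, hbij.mapsTo, hinv, hs0I, hfix, hsign, huniq⟩
  have orbit_a (k : ℕ) : β^[k] a ∈ insert s0 (range (β^[·] a) ∪ range (β^[·] b)) :=
    Or.inr (Or.inl ⟨k, rfl⟩)
  have orbit_b (k : ℕ) : β^[k] b ∈ insert s0 (range (β^[·] a) ∪ range (β^[·] b)) :=
    Or.inr (Or.inr ⟨k, rfl⟩)
  have e1a : IsOrbitEigenfunction β βinv s0 r lam1 phi1 a :=
    ⟨fun k => hphi1eig _ (orbit_a k), hphi1L2a, hphi1c, hDphi1d.continuousAt⟩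
  have e1b : IsOrbitEigenfunction β βinv s0 r lam1 phi1 b :=
    ⟨fun k => hphi1eig _ (orbit_b k), hphi1L2b, hphi1c, hDphi1d.continuousAt⟩
  have e2a : IsOrbitEigenfunction β βinv s0 r lam2 phi2 a :=
    ⟨fun k => hphi2eig _ (orbit_a k), hphi2L2a, hphi2c, hDphi2d.continuousAt⟩
  have e2b : IsOrbitEigenfunction β βinv s0 r lam2 phi2 b :=
    ⟨fun k => hphi2eig _ (orbit_b k), hphi2L2b, hphi2c, hDphi2d.continuousAt⟩
  have hlam2 : conj lam2 = lam2 := by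
    have h22 := hβ.sub_mul_betaIntAB_eq_zero ha hb e2a e2b e2a.conj e2b.conj ha12 hphi2bc1
      (boundary_conj hphi2bc1) hb12 hphi2bc2 (boundary_conj hphi2bc2)
    rw [betaIntAB_mul_conj_self] at h22
    exact (sub_eq_zero.1 ((mul_eq_zero.1 h22).resolve_right (by exact_mod_cast hphi2pos.ne'))).symm
  have h12 := hβ.sub_mul_betaIntAB_eq_zero ha hb e1a e1b e2a.conj e2b.conj ha12 hphi1bc1
    (boundary_conj hphi2bc1) hb12 hphi1bc2 (boundary_conj hphi2bc2)
  rw [hlam2] at h12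
  exact (mul_eq_zero.1 h12).resolve_left (sub_ne_zero.2 hlam)

theorem stmt_13
    (I : Set ℝ) (hIconn : I.OrdConnected)
    (β βinv : ℝ → ℝ) (s0 : ℝ)
    (hmono : StrictMonoOn β I) (hcont : ContinuousOn β I)
    (hbij : Set.BijOn β I I) (hinv : Set.InvOn βinv β I I)
    (hs0I : s0 ∈ I) (hfix : β s0 = s0)
    (hsign : ∀ t ∈ I, (t - s0) * (β t - t) ≤ 0)
    (huniq : ∀ t ∈ I, (t - s0) * (β t - t) = 0 → t = s0)
    (a b : ℝ) (ha : a ∈ I) (hb : b ∈ I) (has0 : a ≤ s0) (hs0b : s0 ≤ b)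
    (r : ℝ → ℝ) (hr : ContinuousOn r (Set.Icc a b))
    (a1 a2 b1 b2 : ℝ) (ha12 : |a1| + |a2| ≠ 0) (hb12 : |b1| + |b2| ≠ 0)
    (lam1 lam2 : ℂ) (hlam : lam1 ≠ lam2) (phi1 phi2 : ℝ → ℂ)
    (hphi1L2a : Summable fun j : ℕ => (β^[j] a - β^[j + 1] a) * ‖phi1 (β^[j] a)‖ ^ 2)
    (hphi1L2b : Summable fun j : ℕ => (β^[j] b - β^[j + 1] b) * ‖phi1 (β^[j] b)‖ ^ 2)
    (hphi1c : ContinuousAt phi1 s0) (hphi1d : DifferentiableAt ℝ phi1 s0)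
    (hDphi1d : DifferentiableAt ℝ (Dq β s0 phi1) s0)
    (hDphi1b : ∃ C, ∀ t ∈ insert s0 (Set.range (fun j : ℕ => β^[j] a) ∪ Set.range (fun j : ℕ => β^[j] b)), ‖Dq β s0 phi1 t‖ ≤ C)
    (hDDphi1b : ∃ C, ∀ t ∈ insert s0 (Set.range (fun j : ℕ => β^[j] a) ∪ Set.range (fun j : ℕ => β^[j] b)), ‖Dq βinv s0 (Dq β s0 phi1) t‖ ≤ C)
    (hphi1eig : ∀ t ∈ insert s0 (Set.range (fun j : ℕ => β^[j] a) ∪ Set.range (fun j : ℕ => β^[j] b)), ellBeta β βinv s0 r phi1 t = lam1 * phi1 t)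
    (hphi1bc1 : (a1 : ℂ) * phi1 a + (a2 : ℂ) * Dq βinv s0 phi1 a = 0)
    (hphi1bc2 : (b1 : ℂ) * phi1 b + (b2 : ℂ) * Dq βinv s0 phi1 b = 0)
    (hphi1pos : 0 < betaIntRAB β a b fun t => ‖phi1 t‖ ^ 2)
    (hphi2L2a : Summable fun j : ℕ => (β^[j] a - β^[j + 1] a) * ‖phi2 (β^[j] a)‖ ^ 2)
    (hphi2L2b : Summable fun j : ℕ => (β^[j] b - β^[j + 1] b) * ‖phi2 (β^[j] b)‖ ^ 2)
    (hphi2c : ContinuousAt phi2 s0) (hphi2d : DifferentiableAt ℝ phi2 s0)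
    (hDphi2d : DifferentiableAt ℝ (Dq β s0 phi2) s0)
    (hDphi2b : ∃ C, ∀ t ∈ insert s0 (Set.range (fun j : ℕ => β^[j] a) ∪ Set.range (fun j : ℕ => β^[j] b)), ‖Dq β s0 phi2 t‖ ≤ C)
    (hDDphi2b : ∃ C, ∀ t ∈ insert s0 (Set.range (fun j : ℕ => β^[j] a) ∪ Set.range (fun j : ℕ => β^[j] b)), ‖Dq βinv s0 (Dq β s0 phi2) t‖ ≤ C)
    (hphi2eig : ∀ t ∈ insert s0 (Set.range (fun j : ℕ => β^[j] a) ∪ Set.range (fun j : ℕ => β^[j] b)), ellBeta β βinv s0 r phi2 t = lam2 * phi2 t)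
    (hphi2bc1 : (a1 : ℂ) * phi2 a + (a2 : ℂ) * Dq βinv s0 phi2 a = 0)
    (hphi2bc2 : (b1 : ℂ) * phi2 b + (b2 : ℂ) * Dq βinv s0 phi2 b = 0)
    (hphi2pos : 0 < betaIntRAB β a b fun t => ‖phi2 t‖ ^ 2) :
    betaIntAB β a b (fun t => phi1 t * conj (phi2 t)) = 0 :=
  stmt_13_general I hIconn β βinv s0 hmono hcont hbij hinv hs0I hfix hsign huniq a b ha hb r a1 a2
    b1 b2 ha12 hb12 lam1 lam2 hlam phi1 phi2 hphi1L2a hphi1L2b hphi1c hDphi1d hphi1eig hphi1bc1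
    hphi1bc2 hphi2L2a hphi2L2b hphi2c hDphi2d hphi2eig hphi2bc1 hphi2bc2 hphi2pos
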